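/- Let L be a nilpotent Lie ring over ℤ, additively free of rank h, of nilpotency class c, let Z be the isolator of γ_c(L), and let B be a finite-index ideal of L containing Z. Then γ_c(L, B) ⊇ [L:B] · γ_c(L), where γ_1(L,B) = B and γ_i(L,B) = [γ_{i-1}(L,B), L]. -/

import Mathlib

/-- `gammaRel L A i` is the series `γ_{i+1}(L, A)`: `γ_1(L,A) = A` and
`γ_{i+1}(L,A) = ⟨[γ_i(L,A), L]⟩`.  In particular `γ_c(L) = gammaRel L ⊤ (c-1)`. -/
def gammaRel (L : Type*) [LieRing L] (A : AddSubgroup L) : ℕ → AddSubgroup L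
  | 0 => A
  | i + 1 => AddSubgroup.closure {z | ∃ x ∈ gammaRel L A i, ∃ y : L, z = ⁅x, y⁆}

/-- Multiplying by the index of `B` carries `γ_{i+1}(L,⊤)` into `γ_{i+1}(L,B)`. -/
theorem smul_index_gammaRel_mem (L : Type*) [LieRing L] (B : AddSubgroup L) :
    ∀ i : ℕ, ∀ x ∈ gammaRel L ⊤ i, (B.index : ℤ) • x ∈ gammaRel L B i := by
  intro i
  induction i with
  | zero =>
    intro x _
    show (B.index : ℤ) • x ∈ B
    rw [natCast_zsmul]
    exact B.nsmul_index_mem x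
  | succ i ih =>
    intro x hx
    have hx' : x ∈ AddSubgroup.closure {z | ∃ a ∈ gammaRel L ⊤ i, ∃ y : L, z = ⁅a, y⁆} := hx
    clear hx
    show (B.index : ℤ) • x ∈
      AddSubgroup.closure {z | ∃ a ∈ gammaRel L B i, ∃ y : L, z = ⁅a, y⁆}
    induction hx' using AddSubgroup.closure_induction with
    | mem z hz =>
      obtain ⟨a, ha, y, rfl⟩ := hz
      rw [← smul_lie]
      exact AddSubgroup.subset_closure ⟨(B.index : ℤ) • a, ih a ha, y, rfl⟩
    | zero => simpa using (AddSubgroup.closure _).zero_mem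
    | add u v _ _ hu hv => rw [smul_add]; exact (AddSubgroup.closure _).add_mem hu hv
    | neg u _ hu => rw [smul_neg]; exact (AddSubgroup.closure _).neg_mem hu

/-- Let `L` be a nilpotent Lie ring, additively free of rank `h`, of nilpotency class `c`,
let `Z` be the isolator of `γ_c(L)`, and let `B` be a finite-index ideal of `L` containing
`Z`.  Then `γ_c(L, B) ⊇ [L:B] · γ_c(L)`. -/
theorem gamma_c_ideal_contains (L : Type*) [LieRing L] (h c : ℕ)
    (b : Module.Basis (Fin h) ℤ L) (hc : 1 ≤ c)
    (hclass : gammaRel L ⊤ c = ⊥) (hclass' : gammaRel L ⊤ (c - 1) ≠ ⊥)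
    (B : AddSubgroup L)
    (hBideal : ∀ x ∈ B, ∀ y : L, ⁅x, y⁆ ∈ B)
    (hBfin : B.index ≠ 0)
    (hZ : ∀ x : L, (∃ n : ℕ, 0 < n ∧ (n : ℤ) • x ∈ gammaRel L ⊤ (c - 1)) → x ∈ B) :
    ∀ x ∈ gammaRel L ⊤ (c - 1), (B.index : ℤ) • x ∈ gammaRel L B (c - 1) :=
  smul_index_gammaRel_mem L B (c - 1)
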